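/- Let A be an M × N real matrix with nonnegative entries, M < N. Define R(λ_1,...,λ_N) = Σ_{S ⊆ {1,...,N}, |S| = M} per(A_S) · Π_{j ∈ S̄} λ_j, where A_S is the M × M submatrix of A on columns S, S̄ = {1,...,N} \ S, and per denotes the permanent. Then R is a homogeneous polynomial of degree N − M with nonnegative real coefficients, and R is either identically zero or H-stable. -/

import Mathlib

/-!
Write `R(z)` as the sum over injections `f` of rows into columns of
`∏ i, A i (f i) * ∏_{j ∉ range f} z j`. If `A'` is `A` without its first row `a₀`, then `R_A`
is the derivative of `R_{A'}` in the direction `a₀`. By induction on the number of rows, either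
all terms of `R_{A'}` vanish or `R_{A'}` has no zero on the open orthant `{Re z_j > 0}`. In the
second case, for `z` in the orthant all roots of `t ↦ R_{A'}(z + t a₀)` have negative real part,
so `g = R_A / R_{A'}` has `Re g ≥ 0` on the orthant. If `R_A` vanished at some point, the maximum
modulus principle for `exp (-g)` would force `Re g ≡ 0`, contradicting `g(1, …, 1) > 0` unless
all terms of `R_A` vanish.
-/

/-- The permanent of a square real matrix. -/
noncomputable def permanent {n : ℕ} (B : Matrix (Fin n) (Fin n) ℝ) : ℝ :=
  ∑ σ : Equiv.Perm (Fin n), ∏ i, B i (σ i)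

/-- A multivariate real polynomial is H-stable if it does not vanish at any point
all of whose coordinates have positive real part. -/
def Hstable {σ : Type*} (p : MvPolynomial σ ℝ) : Prop :=
  ∀ z : σ → ℂ, (∀ i, 0 < (z i).re) → MvPolynomial.aeval z p ≠ 0

/-- The polynomial `R = Σ_{|S| = M} per(A_S) Π_{j ∉ S} X_j`. -/
noncomputable def Rpoly {M N : ℕ} (A : Matrix (Fin M) (Fin N) ℝ) :
    MvPolynomial (Fin N) ℝ :=
  ∑ S ∈ (Finset.powersetCard M (Finset.univ : Finset (Fin N))).attach,
    MvPolynomial.C (permanent (Matrix.of fun i k =>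
      A i ((S.1.orderIsoOfFin ((Finset.mem_powersetCard.mp S.2).2)) k))) *
      ∏ j ∈ S.1ᶜ, MvPolynomial.X j

open Finset

namespace Polynomial

open scoped Polynomial

theorem re_eval_derivative_div_eval_nonneg {p : ℂ[X]}
    (hp : ∀ t : ℂ, 0 ≤ t.re → p.eval t ≠ 0) {x : ℂ} (hx : 0 ≤ x.re) :
    0 ≤ (p.derivative.eval x / p.eval x).re := by
  -- `p' / p = ∑ 1 / (x - r)` over the roots `r`, and `Re (x - r) > 0` for each of them.
  rw [(IsAlgClosed.splits p).eval_derivative_div_eval_of_ne_zero (hp x hx),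
    ← Complex.coe_reAddGroupHom, map_multiset_sum, Multiset.map_map]
  refine Multiset.sum_nonneg fun w hw => ?_
  obtain ⟨r, hr, rfl⟩ := Multiset.mem_map.mp hw
  have hr_re : r.re < 0 := not_le.mp fun h => hp r h (isRoot_of_mem_roots hr)
  rw [Function.comp_apply, Complex.coe_reAddGroupHom, one_div, Complex.inv_re]
  exact div_nonneg (by rw [Complex.sub_re]; linarith) (Complex.normSq_nonneg _)

end Polynomial

theorem Complex.re_eq_zero_of_re_nonneg_of_eq_zero {E : Type*} [NormedAddCommGroup E]
    [NormedSpace ℂ E] {g : E → ℂ} {U : Set E} {c : E} (hU : IsPreconnected U)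
    (hUo : IsOpen U) (hg : DifferentiableOn ℂ g U) (hre : ∀ x ∈ U, 0 ≤ (g x).re) (hcU : c ∈ U)
    (hc : g c = 0) {x : E} (hx : x ∈ U) : (g x).re = 0 := by
  have hmax : IsMaxOn (norm ∘ fun y => Complex.exp (-g y)) U c := fun y hy => by
    simpa [Complex.norm_exp, hc] using hre y hy
  have := Complex.norm_eqOn_of_isPreconnected_of_isMaxOn hU hUo hg.neg.cexp hcU hmax hx
  simpa [Complex.norm_exp, hc] using this

def posRe (ι : Type*) : Set (ι → ℂ) := {w | ∀ j, 0 < (w j).re}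

theorem isOpen_posRe (ι : Type*) [Finite ι] : IsOpen (posRe ι) := by
  simpa only [posRe, Set.ofPred_forall] using
    isOpen_iInter_of_finite fun j => isOpen_lt continuous_const (by fun_prop)

theorem convex_posRe (ι : Type*) : Convex ℝ (posRe ι) := by
  simp only [posRe, Set.ofPred_forall]
  exact convex_iInter fun j =>
    (convex_halfSpace_re_gt 0).linear_preimage (LinearMap.proj (R := ℝ) (φ := fun _ : ι => ℂ) j)

namespace MvPolynomial

theorem C_mul_prod_X_eq_monomial {R σ : Type*} [CommSemiring R] (c : R)
    (T : Finset σ) : C c * ∏ j ∈ T, (X j : MvPolynomial σ R) =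
      monomial (∑ j ∈ T, Finsupp.single j 1) c := by
  simp only [X, ← monomial_sum_one, C_mul_monomial, mul_one]

end MvPolynomial

theorem permanent_nonneg {n : ℕ} {B : Matrix (Fin n) (Fin n) ℝ} (hB : ∀ i j, 0 ≤ B i j) :
    0 ≤ permanent B :=
  sum_nonneg fun σ _ => prod_nonneg fun i _ => hB i (σ i)

section Rfun

open Polynomial

variable {M : ℕ} {ι : Type*} [Fintype ι] [DecidableEq ι]

noncomputable def Rfun (A : Matrix (Fin M) ι ℝ) (z : ι → ℂ) : ℂ :=
  ∑ f : Fin M ↪ ι, (∏ i, (A i (f i) : ℂ)) * ∏ j ∈ (univ.image f)ᶜ, z j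

theorem Rfun_one (A : Matrix (Fin M) ι ℝ) :
    Rfun A 1 = ((∑ f : Fin M ↪ ι, ∏ i, A i (f i) : ℝ) : ℂ) := by
  simp [Rfun]

theorem differentiable_Rfun (A : Matrix (Fin M) ι ℝ) : Differentiable ℂ (Rfun A) := by
  unfold Rfun
  fun_prop

noncomputable def Rline (A : Matrix (Fin M) ι ℝ) (z a : ι → ℂ) : ℂ[X] :=
  ∑ f : Fin M ↪ ι,
    C (∏ i, (A i (f i) : ℂ)) * ∏ j ∈ (univ.image f)ᶜ, (C (z j) + C (a j) * X)

theorem eval_Rline (A : Matrix (Fin M) ι ℝ) (z a : ι → ℂ) (t : ℂ) :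
    (Rline A z a).eval t = Rfun A (z + t • a) := by
  simp [Rline, Rfun, eval_finsetSum, eval_prod, mul_comm t]

theorem eval_derivative_Rline_zero (A : Matrix (Fin M) ι ℝ) (z a : ι → ℂ) :
    (Rline A z a).derivative.eval 0 = ∑ f : Fin M ↪ ι, (∏ i, (A i (f i) : ℂ)) *
      ∑ k ∈ (univ.image f)ᶜ, (∏ j ∈ (univ.image f)ᶜ.erase k, z j) * a k := by
  simp only [Rline, derivative_sum, derivative_C_mul, derivative_prod_finset, derivative_add,
    derivative_C, derivative_X, zero_add, eval_finsetSum, eval_mul, eval_C, eval_prod, eval_add,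
    eval_X, mul_zero, add_zero, mul_one]

theorem Fin.image_univ_cons {α : Type*} [DecidableEq α] (a : α) (f : Fin M → α) :
    univ.image (Fin.cons a f : Fin (M + 1) → α) = insert a (univ.image f) := by
  ext
  simp [Fin.exists_fin_succ, eq_comm]

theorem Rfun_succ (A : Matrix (Fin (M + 1)) ι ℝ) (z : ι → ℂ) :
    Rfun A z = (Rline (A.submatrix Fin.succ id) z fun j => (A 0 j : ℂ)).derivative.eval 0 := by
  rw [eval_derivative_Rline_zero, Rfun, ← (Equiv.embeddingFinSucc M ι).symm.sum_comp,
    Fintype.sum_sigma]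
  refine Fintype.sum_congr _ _ fun f => ?_
  simp only [Equiv.coe_embeddingFinSucc_symm, Fin.image_univ_cons, compl_insert,
    Fin.prod_univ_succ, Fin.cons_zero, Fin.cons_succ, Matrix.submatrix_apply, id, mul_sum]
  rw [sum_subtype _ (p := fun k => k ∉ Set.range f) (by simp)]
  refine Fintype.sum_congr _ _ fun k => ?_
  ring

theorem re_Rfun_div_Rfun_tail_nonneg (A : Matrix (Fin (M + 1)) ι ℝ)
    (hA : ∀ i j, 0 ≤ A i j)
    (htail : ∀ w ∈ posRe ι, Rfun (A.submatrix Fin.succ id) w ≠ 0) {z : ι → ℂ}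
    (hz : z ∈ posRe ι) : 0 ≤ (Rfun A z / Rfun (A.submatrix Fin.succ id) z).re := by
  have hline : ∀ t : ℂ, 0 ≤ t.re →
      (Rline (A.submatrix Fin.succ id) z fun j => (A 0 j : ℂ)).eval t ≠ 0 := by
    intro t ht
    rw [eval_Rline]
    refine htail _ fun j => ?_
    simpa using add_pos_of_pos_of_nonneg (hz j) (mul_nonneg ht (hA 0 j))
  have := re_eval_derivative_div_eval_nonneg hline (x := 0) (by simp)
  rwa [← Rfun_succ, eval_Rline, zero_smul, add_zero] at this

theorem Rfun_ne_zero_succ (A : Matrix (Fin (M + 1)) ι ℝ) (hA : ∀ i j, 0 ≤ A i j)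
    (htail : ∀ w ∈ posRe ι, Rfun (A.submatrix Fin.succ id) w ≠ 0)
    (hpos : 0 < ∑ f : Fin (M + 1) ↪ ι, ∏ i, A i (f i)) {z : ι → ℂ} (hz : z ∈ posRe ι) :
    Rfun A z ≠ 0 := by
  intro hzero
  set A' := A.submatrix Fin.succ id
  have hone : (1 : ι → ℂ) ∈ posRe ι := fun _ => by simp
  have hdiff : DifferentiableOn ℂ (fun w => Rfun A w / Rfun A' w) (posRe ι) := by
    simp only [div_eq_mul_inv]
    exact (differentiable_Rfun A).differentiableOn.fun_mul
      ((differentiable_Rfun A').differentiableOn.fun_inv htail)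
  have hre := Complex.re_eq_zero_of_re_nonneg_of_eq_zero (convex_posRe ι).isPreconnected
    (isOpen_posRe ι) hdiff (fun w hw => re_Rfun_div_Rfun_tail_nonneg A hA htail hw) hz
    (by simp [hzero]) hone
  have hpos' : 0 < ∑ f : Fin M ↪ ι, ∏ i, A' i (f i) := by
    refine (sum_nonneg fun f _ => prod_nonneg fun i _ => hA _ _).lt_of_ne fun h => ?_
    exact htail 1 hone (by rw [Rfun_one]; exact_mod_cast h.symm)
  rw [Rfun_one, Rfun_one, ← Complex.ofReal_div, Complex.ofReal_re] at hre
  exact (div_pos hpos hpos').ne' hre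

theorem prod_eq_zero_or_Rfun_ne_zero (A : Matrix (Fin M) ι ℝ) (hA : ∀ i j, 0 ≤ A i j) :
    (∀ f : Fin M ↪ ι, ∏ i, A i (f i) = 0) ∨ ∀ z ∈ posRe ι, Rfun A z ≠ 0 := by
  induction M with
  | zero =>
    right
    intro z hz
    simpa [Rfun, prod_ne_zero_iff] using fun j => Complex.ne_zero_of_re_pos (hz j)
  | succ M ih =>
    rcases ih (A.submatrix Fin.succ id) fun i j => hA _ _ with htail | htail
    · left
      intro f
      rw [Fin.prod_univ_succ]
      exact mul_eq_zero_of_right _ (htail (Equiv.embeddingFinSucc M ι f).1)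
    · by_cases hall : ∀ f : Fin (M + 1) ↪ ι, ∏ i, A i (f i) = 0
      · exact Or.inl hall
      obtain ⟨f, hf⟩ := not_forall.mp hall
      have hpos : 0 < ∑ f : Fin (M + 1) ↪ ι, ∏ i, A i (f i) :=
        sum_pos' (fun f _ => prod_nonneg fun i _ => hA _ _)
          ⟨f, mem_univ f, (prod_nonneg fun i _ => hA _ _).lt_of_ne' hf⟩
      exact Or.inr fun z hz => Rfun_ne_zero_succ A hA htail hpos hz

end Rfun

open MvPolynomial

variable {M N : ℕ}

theorem permanent_submatrix_eq_sum (A : Matrix (Fin M) (Fin N) ℝ) {S : Finset (Fin N)}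
    (hS : S.card = M) :
    permanent (Matrix.of fun i k => A i (S.orderIsoOfFin hS k)) =
      ∑ f ∈ univ.filter fun f : Fin M ↪ Fin N => univ.image f = S, ∏ i, A i (f i) := by
  set e := S.orderIsoOfFin hS
  refine sum_bij (fun σ _ => σ.toEmbedding.trans (e.toEquiv.toEmbedding.trans (.subtype _)))
    (fun σ _ => ?_) (fun σ _ τ _ h => ?_) (fun f hf => ?_) fun σ _ => rfl
  · rw [mem_filter]
    refine ⟨mem_univ _, ?_⟩
    ext x
    simp only [mem_image, mem_univ, true_and, Function.Embedding.trans_apply]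
    refine ⟨?_, fun hx => ⟨σ.symm (e.symm ⟨x, hx⟩), by simp⟩⟩
    rintro ⟨i, rfl⟩
    exact (e (σ i)).2
  · exact Equiv.ext fun i => e.injective (Subtype.ext (DFunLike.congr_fun h i))
  · have hmem (i : Fin M) : f i ∈ S := (mem_filter.mp hf).2 ▸ mem_image_of_mem f (mem_univ i)
    have hinj : Function.Injective fun i => e.symm ⟨f i, hmem i⟩ := fun i j hij =>
      f.injective (congrArg Subtype.val (e.symm.injective hij))
    refine ⟨Equiv.ofBijective _ (Finite.injective_iff_bijective.mp hinj), mem_univ _, ?_⟩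
    ext i
    simp

theorem Rfun_eq_sum_powersetCard (A : Matrix (Fin M) (Fin N) ℝ) (z : Fin N → ℂ) :
    Rfun A z = ∑ S ∈ powersetCard M univ,
      (∑ f ∈ univ.filter fun f : Fin M ↪ Fin N => univ.image f = S, ∏ i, (A i (f i) : ℂ)) *
        ∏ j ∈ Sᶜ, z j := by
  rw [Rfun, ← sum_fiberwise_of_maps_to (g := fun f : Fin M ↪ Fin N => univ.image f)
    (t := powersetCard M univ) fun f _ => ?_]
  · refine sum_congr rfl fun S _ => ?_
    rw [sum_mul]
    exact sum_congr rfl fun f hf => by rw [(mem_filter.mp hf).2]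
  · simp [mem_powersetCard, card_image_of_injective _ f.injective]

theorem aeval_Rpoly (A : Matrix (Fin M) (Fin N) ℝ) (z : Fin N → ℂ) :
    MvPolynomial.aeval z (Rpoly A) = Rfun A z := by
  rw [Rfun_eq_sum_powersetCard, ← sum_attach]
  simp only [Rpoly, map_sum, map_mul, MvPolynomial.aeval_C, map_prod, MvPolynomial.aeval_X,
    permanent_submatrix_eq_sum, Complex.coe_algebraMap]

theorem isHomogeneous_Rpoly (A : Matrix (Fin M) (Fin N) ℝ) :
    (Rpoly A).IsHomogeneous (N - M) := by
  refine IsHomogeneous.sum _ _ _ fun S _ => ?_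
  rw [C_mul_prod_X_eq_monomial]
  refine isHomogeneous_monomial _ ?_
  simp [map_sum, card_compl, (mem_powersetCard.mp S.2).2]

theorem coeff_Rpoly_nonneg {A : Matrix (Fin M) (Fin N) ℝ} (hA : ∀ i j, 0 ≤ A i j)
    (d : Fin N →₀ ℕ) : 0 ≤ (Rpoly A).coeff d := by
  rw [Rpoly, coeff_sum]
  refine sum_nonneg fun S _ => ?_
  rw [C_mul_prod_X_eq_monomial, coeff_monomial]
  split_ifs
  · exact permanent_nonneg fun i k => hA _ _
  · exact le_rfl

theorem Rpoly_eq_zero_of_prod_eq_zero {A : Matrix (Fin M) (Fin N) ℝ}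
    (h : ∀ f : Fin M ↪ Fin N, ∏ i, A i (f i) = 0) : Rpoly A = 0 :=
  sum_eq_zero fun S _ => by
    rw [permanent_submatrix_eq_sum, sum_eq_zero fun f _ => h f, C_0, zero_mul]

theorem stmt11_general {M N : ℕ} (A : Matrix (Fin M) (Fin N) ℝ)
    (hA : ∀ i j, 0 ≤ A i j) :
    (Rpoly A).IsHomogeneous (N - M) ∧ (∀ c, 0 ≤ (Rpoly A).coeff c) ∧
      (Rpoly A = 0 ∨ Hstable (Rpoly A)) := by
  refine ⟨isHomogeneous_Rpoly A, coeff_Rpoly_nonneg hA, ?_⟩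
  rcases prod_eq_zero_or_Rfun_ne_zero A hA with hzero | hstable
  · exact Or.inl (Rpoly_eq_zero_of_prod_eq_zero hzero)
  · exact Or.inr fun z hz => aeval_Rpoly A z ▸ hstable z hz

theorem stmt11 {M N : ℕ} (hMN : M < N) (A : Matrix (Fin M) (Fin N) ℝ)
    (hA : ∀ i j, 0 ≤ A i j) :
    (Rpoly A).IsHomogeneous (N - M) ∧ (∀ c, 0 ≤ (Rpoly A).coeff c) ∧
      (Rpoly A = 0 ∨ Hstable (Rpoly A)) :=
  stmt11_general A hA
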